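/- For every h > 0 and T > 0, \sum_{n \in \Z} (1 - 4h^2 n^2/T) exp(-2h^2 n^2/T) = -(1/2) \sum_{n \in \Z} H_2((2h/\sqrt{2T}) n) exp(-2h^2 n^2/T), where H_2(x) = 4x^2 - 2; moreover this quantity lies in [0,1]. -/

import Mathlib

/-!
With `c = 2h²/T`, `θ(c) = ∑ exp(-c n²)` and `M(c) = ∑ n² exp(-c n²) = -θ'(c)`, the series is
`θ(c) - 2c M(c) = 2√c · (√c θ)'(c)`. Differentiating the functional equation
`√c θ(c) = √π θ(π²/c)` (Poisson summation) turns it into `2√(πc) (π²/c²) M(π²/c)`, which is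
nonnegative, and which is small when `c < 1/2` because `M(u) = O(e^{-u})`. When `c ≥ 1/2` every
term with `n ≠ 0` is nonpositive, so the series is at most its `n = 0` term, `1`.
-/

/-- The second physicists' Hermite polynomial. -/
noncomputable def hermiteH2 (x : ℝ) : ℝ := 4 * x ^ 2 - 2

open Real Set

lemma summable_nat_pow_mul_exp_neg_mul_sq (k : ℕ) {a : ℝ} (ha : 0 < a) :
    Summable fun n : ℕ => (n : ℝ) ^ k * exp (-a * n ^ 2) := by
  refine (summable_pow_mul_exp_neg_nat_mul k ha).of_nonneg_of_le (fun n => by positivity)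
    fun n => ?_
  have hn : (n : ℝ) ≤ (n : ℝ) ^ 2 := by exact_mod_cast Nat.le_self_pow two_ne_zero n
  exact mul_le_mul_of_nonneg_left (exp_le_exp.2 (by nlinarith)) (by positivity)

lemma summable_int_pow_mul_exp_neg_mul_sq (k : ℕ) {a : ℝ} (ha : 0 < a) :
    Summable fun n : ℤ => (n : ℝ) ^ k * exp (-a * n ^ 2) := by
  have h := summable_nat_pow_mul_exp_neg_mul_sq k ha
  refine .of_nat_of_neg (by simpa using h) ?_
  refine (h.mul_left ((-1) ^ k)).congr fun n => ?_
  push_cast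
  rw [neg_pow, neg_sq]
  ring

noncomputable def gaussTheta (y : ℝ) : ℝ := ∑' n : ℤ, exp (-y * n ^ 2)

noncomputable def gaussMoment (y : ℝ) : ℝ := ∑' n : ℤ, (n : ℝ) ^ 2 * exp (-y * n ^ 2)

lemma hasDerivAt_gaussTheta {c : ℝ} (hc : 0 < c) :
    HasDerivAt gaussTheta (-gaussMoment c) c := by
  have hterm (n : ℤ) (y : ℝ) :
      HasDerivAt (fun y => exp (-y * n ^ 2)) (-(n : ℝ) ^ 2 * exp (-y * n ^ 2)) y := by
    simpa [mul_comm] using ((hasDerivAt_neg y).mul_const ((n : ℝ) ^ 2)).exp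
  have hbound (n : ℤ) (y : ℝ) (hy : y ∈ Ioi (c / 2)) :
      ‖-(n : ℝ) ^ 2 * exp (-y * n ^ 2)‖ ≤ (n : ℝ) ^ 2 * exp (-(c / 2) * n ^ 2) := by
    rw [norm_mul, norm_neg, Real.norm_of_nonneg (by positivity),
      Real.norm_of_nonneg (exp_pos _).le]
    gcongr
    exact hy.le
  have := hasDerivAt_tsum_of_isPreconnected (summable_int_pow_mul_exp_neg_mul_sq 2 (half_pos hc))
    isOpen_Ioi isPreconnected_Ioi (fun n y _ => hterm n y) hbound (half_lt_self hc)
    (by simpa using summable_int_pow_mul_exp_neg_mul_sq 0 hc) (half_lt_self hc)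
  have hM : -gaussMoment c = ∑' n : ℤ, -(n : ℝ) ^ 2 * exp (-c * n ^ 2) := by
    rw [gaussMoment, ← tsum_neg]
    simp only [neg_mul]
  rw [hM]
  exact this

lemma sqrt_mul_gaussTheta {y : ℝ} (hy : 0 < y) :
    √y * gaussTheta y = √π * gaussTheta (π ^ 2 / y) := by
  have h := tsum_exp_neg_mul_int_sq (div_pos hy pi_pos)
  have e1 : -π * (y / π) = -y := by field_simp
  have e2 : -π / (y / π) = -(π ^ 2 / y) := by field_simp
  rw [e1, e2] at h
  rw [gaussTheta, gaussTheta, h, ← sqrt_eq_rpow, sqrt_div hy.le]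
  field_simp

lemma gaussTheta_sub_two_mul_gaussMoment {c : ℝ} (hc : 0 < c) :
    gaussTheta c - 2 * c * gaussMoment c =
      2 * √(π * c) * (π ^ 2 / c ^ 2) * gaussMoment (π ^ 2 / c) := by
  have hL : HasDerivAt (fun y => √y * gaussTheta y)
      (1 / (2 * √c) * gaussTheta c + √c * -gaussMoment c) c :=
    (hasDerivAt_sqrt hc.ne').mul (hasDerivAt_gaussTheta hc)
  have hinv : HasDerivAt (fun y => π ^ 2 / y) (-(π ^ 2) / c ^ 2) c := by
    simpa [div_eq_mul_inv] using (hasDerivAt_inv hc.ne').const_mul (π ^ 2)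
  have hR : HasDerivAt (fun y => √π * gaussTheta (π ^ 2 / y))
      (√π * (-gaussMoment (π ^ 2 / c) * (-(π ^ 2) / c ^ 2))) c :=
    ((hasDerivAt_gaussTheta (by positivity)).comp c hinv).const_mul √π
  have heq : (fun y => √y * gaussTheta y) =ᶠ[nhds c] fun y => √π * gaussTheta (π ^ 2 / y) :=
    Filter.eventually_of_mem (Ioi_mem_nhds hc) fun y hy => sqrt_mul_gaussTheta hy
  have h := (hL.congr_of_eventuallyEq heq.symm).unique hR
  have hs : √c ^ 2 = c := sq_sqrt hc.le
  have hs0 : √c ≠ 0 := by positivity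
  rw [sqrt_mul pi_pos.le]
  field_simp at h ⊢
  rw [hs] at h
  linear_combination h

lemma hasSum_one_sub_two_mul_mul_exp {c : ℝ} (hc : 0 < c) :
    HasSum (fun n : ℤ => (1 - 2 * c * n ^ 2) * exp (-c * n ^ 2))
      (gaussTheta c - 2 * c * gaussMoment c) := by
  have hθ : HasSum (fun n : ℤ => exp (-c * n ^ 2)) (gaussTheta c) :=
    (by simpa using summable_int_pow_mul_exp_neg_mul_sq 0 hc : Summable _).hasSum
  have hM : HasSum (fun n : ℤ => (n : ℝ) ^ 2 * exp (-c * n ^ 2)) (gaussMoment c) :=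
    (summable_int_pow_mul_exp_neg_mul_sq 2 hc).hasSum
  exact (hθ.sub (hM.mul_left (2 * c))).congr_fun fun n => by ring

lemma gaussMoment_nonneg (y : ℝ) : 0 ≤ gaussMoment y :=
  tsum_nonneg fun n => by positivity

lemma sq_mul_exp_neg_mul_sq_le {u m : ℝ} (hu : 1 ≤ u) (hm : 1 ≤ m) :
    m ^ 2 * exp (-u * m ^ 2) ≤ exp ((1 - u) * m) :=
  calc m ^ 2 * exp (-u * m ^ 2) ≤ exp (m ^ 2) * exp (-u * m ^ 2) := by
        gcongr
        linarith [add_one_le_exp (m ^ 2)]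
    _ = exp ((1 - u) * m ^ 2) := by rw [← exp_add]; ring_nf
    _ ≤ exp ((1 - u) * m) := by
        have hm' : 0 ≤ m * (m - 1) := mul_nonneg (by linarith) (sub_nonneg.2 hm)
        exact exp_le_exp.2 (by nlinarith [mul_nonneg (sub_nonneg.2 hu) hm'])

lemma gaussMoment_le {u : ℝ} (hu : 2 ≤ u) : gaussMoment u ≤ 4 * exp (1 - u) := by
  set x := exp (1 - u)
  have hx0 : 0 ≤ x := (exp_pos _).le
  have hx : x ≤ 1 / 2 := by
    have : x ≤ exp (-1) := exp_le_exp.2 (by linarith)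
    linarith [exp_neg_one_lt_half]
  set F : ℤ → ℝ := fun n => (n : ℝ) ^ 2 * exp (-u * n ^ 2)
  have hF : Summable F := summable_int_pow_mul_exp_neg_mul_sq 2 (by linarith)
  have hFnat : Summable fun n : ℕ => F n := hF.comp_injective Nat.cast_injective
  have hF_le (n : ℕ) : F (n + 1) ≤ x ^ (n + 1) := by
    have := sq_mul_exp_neg_mul_sq_le (u := u) (m := n + 1) (by linarith) (by simp)
    simp only [F, x, ← exp_nat_mul]
    push_cast
    rwa [mul_comm ((n : ℝ) + 1)]
  have hgeom : HasSum (fun n : ℕ => x ^ (n + 1)) (x / (1 - x)) :=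
    ((hasSum_geometric_of_lt_one hx0 (by linarith)).mul_left x).congr_fun fun n => pow_succ' x n
  have hnat_le : ∑' n : ℕ, F n ≤ x / (1 - x) := by
    rw [hFnat.tsum_eq_zero_add]
    simpa [F] using hasSum_le hF_le ((summable_nat_add_iff 1).2 hFnat).hasSum hgeom
  have hsym : gaussMoment u = 2 * ∑' n : ℕ, F n := by
    calc gaussMoment u = ∑' n : ℕ, (F n + F (-n)) := by
          rw [tsum_nat_add_neg hF, show F 0 = 0 by simp [F], add_zero]; rfl
      _ = 2 * ∑' n : ℕ, F n := by
          rw [← tsum_mul_left]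
          exact tsum_congr fun n => by simp [F]; ring
  have hdiv : x / (1 - x) ≤ 2 * x := by
    rw [div_le_iff₀ (by linarith)]
    nlinarith
  linarith

lemma gaussTheta_sub_two_mul_gaussMoment_nonneg {c : ℝ} (hc : 0 < c) :
    0 ≤ gaussTheta c - 2 * c * gaussMoment c := by
  rw [gaussTheta_sub_two_mul_gaussMoment hc]
  have := gaussMoment_nonneg (π ^ 2 / c)
  positivity

lemma gaussTheta_sub_two_mul_gaussMoment_le_one_of_half_le {c : ℝ} (hc : 1 / 2 ≤ c) :
    gaussTheta c - 2 * c * gaussMoment c ≤ 1 := by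
  refine hasSum_le (fun n => ?_) (hasSum_one_sub_two_mul_mul_exp (by linarith))
    (hasSum_ite_eq (0 : ℤ) (1 : ℝ))
  rcases eq_or_ne n 0 with rfl | hn
  · simp
  · have hn2 : (1 : ℤ) ≤ n ^ 2 := by nlinarith [Int.one_le_abs hn, sq_abs n]
    have hn2' : (1 : ℝ) ≤ (n : ℝ) ^ 2 := by exact_mod_cast hn2
    rw [if_neg hn]
    exact mul_nonpos_of_nonpos_of_nonneg (by nlinarith) (exp_pos _).le

lemma gaussTheta_sub_two_mul_gaussMoment_le_one_of_lt_half {c : ℝ} (hc0 : 0 < c)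
    (hc : c < 1 / 2) : gaussTheta c - 2 * c * gaussMoment c ≤ 1 := by
  -- `u > 2π² > 18`, and `exp u ≥ u⁵/5!` beats `16 e u² < 48 u²` as soon as `u³ ≥ 5760`.
  set u := π ^ 2 / c with hu_def
  have hu : 18 ≤ u := by
    rw [le_div_iff₀ hc0]
    nlinarith [pi_gt_three]
  have hsqrt : √(π * c) ≤ 2 := sqrt_le_iff.2 ⟨by norm_num, by nlinarith [pi_le_four]⟩
  have hcoef : π ^ 2 / c ^ 2 ≤ u ^ 2 := by
    rw [show u ^ 2 = π ^ 2 / c ^ 2 * π ^ 2 by rw [hu_def]; ring]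
    exact le_mul_of_one_le_right (by positivity) (by nlinarith [pi_gt_three])
  have hexp : u ^ 5 / 120 ≤ exp u := by
    simpa [Nat.factorial] using pow_div_factorial_le_exp u (by linarith) 5
  have hu3 : 5760 ≤ u ^ 3 := by nlinarith
  rw [gaussTheta_sub_two_mul_gaussMoment hc0]
  calc 2 * √(π * c) * (π ^ 2 / c ^ 2) * gaussMoment u
      ≤ 2 * 2 * u ^ 2 * (4 * exp (1 - u)) := by
        gcongr
        · exact gaussMoment_nonneg u
        · exact gaussMoment_le (by linarith)
    _ = 16 * exp 1 * u ^ 2 / exp u := by rw [exp_sub]; ring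
    _ ≤ 1 := by
        rw [div_le_one (exp_pos u)]
        nlinarith [exp_one_lt_d9, sq_nonneg u]

lemma neg_half_mul_hermiteH2 (h x : ℝ) {T : ℝ} (hT : 0 < T) :
    -(1 / 2) * hermiteH2 (2 * h / √(2 * T) * x) = 1 - 4 * h ^ 2 * x ^ 2 / T := by
  have hs : √(2 * T) ^ 2 = 2 * T := sq_sqrt (by positivity)
  have hs0 : √(2 * T) ≠ 0 := by positivity
  rw [hermiteH2, mul_pow, div_pow, hs]
  field_simp
  ring

theorem bessel_bridge_max_distribution (h T : ℝ) (hh : 0 < h) (hT : 0 < T) :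
    (∑' n : ℤ, (1 - 4 * h ^ 2 * (n : ℝ) ^ 2 / T) * Real.exp (-2 * h ^ 2 * (n : ℝ) ^ 2 / T)) =
      -(1 / 2) * ∑' n : ℤ,
        hermiteH2 ((2 * h / Real.sqrt (2 * T)) * n) * Real.exp (-2 * h ^ 2 * (n : ℝ) ^ 2 / T) ∧
    (∑' n : ℤ, (1 - 4 * h ^ 2 * (n : ℝ) ^ 2 / T) * Real.exp (-2 * h ^ 2 * (n : ℝ) ^ 2 / T))
      ∈ Set.Icc (0 : ℝ) 1 := by
  set c := 2 * h ^ 2 / T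
  have hc : 0 < c := by positivity
  have hterm (n : ℤ) : (1 - 4 * h ^ 2 * (n : ℝ) ^ 2 / T) * exp (-2 * h ^ 2 * (n : ℝ) ^ 2 / T) =
      (1 - 2 * c * n ^ 2) * exp (-c * n ^ 2) := by
    simp only [c]
    ring_nf
  refine ⟨?_, ?_⟩
  · rw [← tsum_mul_left]
    exact tsum_congr fun n => by rw [← mul_assoc, neg_half_mul_hermiteH2 h n hT]
  · rw [tsum_congr hterm, (hasSum_one_sub_two_mul_mul_exp hc).tsum_eq]
    refine ⟨gaussTheta_sub_two_mul_gaussMoment_nonneg hc, ?_⟩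
    rcases le_or_gt (1 / 2) c with hc2 | hc2
    · exact gaussTheta_sub_two_mul_gaussMoment_le_one_of_half_le hc2
    · exact gaussTheta_sub_two_mul_gaussMoment_le_one_of_lt_half hc hc2
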